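/- arXiv:math/0503282 — 2 statements merged into one kernel-verified Lean document; each statement's English description precedes it below -/
import Mathlib

section
/- Let n, d, e, m be positive integers with n = d·m, m = d·e, d even, and k odd, with 4 ∤ m. Then the image of multiplication by d + k·m·d(d-1)/2 on ℤ/n equals 2d·ℤ/n. -/
theorem range_mulLeft_zmod (n : ℕ) (r : ZMod n) :
    (AddMonoidHom.mulLeft r).range = AddSubgroup.zmultiples r := by
  ext x
  constructor
  · rintro ⟨y, rfl⟩
    obtain ⟨z, rfl⟩ := ZMod.intCast_surjective (n := n) y
    rw [AddSubgroup.mem_zmultiples_iff]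
    exact ⟨z, by rw [zsmul_eq_mul]; show _ = AddMonoidHom.mulLeft r _; simp [mul_comm]⟩
  · intro hx
    rw [AddSubgroup.mem_zmultiples_iff] at hx
    obtain ⟨z, rfl⟩ := hx
    exact ⟨(z : ZMod n), by show r * _ = _; rw [zsmul_eq_mul, mul_comm]⟩

/-- Let n, d, e, m be positive integers with n = d·m, m = d·e, d even, and k odd, with 4 ∤ m.
Then the image of multiplication by d + k·m·d(d-1)/2 on ℤ/n equals 2d·ℤ/n. -/
theorem stmt_15 (n d e m : ℕ) (hd : 0 < d) (he : 0 < e) (hm : 0 < m)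
    (hnm : n = d * m) (hme : m = d * e) (hdev : Even d) (k : ℤ) (hk : Odd k)
    (h4 : ¬ (4 ∣ m)) :
    (AddMonoidHom.mulLeft ((((d : ℤ) + k * m * (d * (d - 1) / 2 : ℕ)) : ℤ) : ZMod n)).range =
      AddSubgroup.zmultiples (((2 * d : ℕ) : ZMod n)) := by
  obtain ⟨a, ha⟩ := hdev
  have hd2 : d = 2 * a := by omega
  have ha0 : 0 < a := by omega
  have hmeven : ∃ s, m = 2 * s := ⟨a * e, by rw [hme, hd2]; ring⟩
  obtain ⟨s, hs⟩ := hmeven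
  have hsodd : Odd s := by
    rcases Nat.even_or_odd s with hse | hso
    · obtain ⟨t, ht⟩ := hse
      exact absurd ⟨t, by omega⟩ h4
    · exact hso
  have hdiv : d * (d - 1) / 2 = a * (d - 1) := by
    have h1 : d * (d - 1) = 2 * (a * (d - 1)) := by rw [hd2]; ring
    rw [h1, Nat.mul_div_cancel_left _ (by norm_num)]
  set C : ℤ := (d : ℤ) + k * m * (d * (d - 1) / 2 : ℕ) with hC
  have hodd : Odd (k * (s : ℤ) * (2 * (a : ℤ) - 1)) := by
    refine (hk.mul ?_).mul ⟨(a : ℤ) - 1, by ring⟩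
    exact_mod_cast hsodd
  obtain ⟨j, hj⟩ := hodd
  set T : ℤ := j + 1 with hT
  have hTdef : 1 + k * (s : ℤ) * (2 * (a : ℤ) - 1) = 2 * T := by rw [hT]; omega
  have hCval : C = T * (2 * (d : ℤ)) := by
    have h1d : (1 : ℕ) ≤ d := hd
    have hd1 : ((d - 1 : ℕ) : ℤ) = 2 * (a : ℤ) - 1 := by
      push_cast [Nat.cast_sub h1d]
      omega
    rw [hC, hdiv]
    push_cast [hd1]
    have hms : (m : ℤ) = 2 * s := by exact_mod_cast hs
    have hdz : (d : ℤ) = 2 * a := by exact_mod_cast hd2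
    rw [hms, hdz]
    nlinarith [hTdef]
  have hcop : IsCoprime T (s : ℤ) := ⟨2, -(k * (2 * (a : ℤ) - 1)), by linarith [hTdef]⟩
  obtain ⟨u, v, huv⟩ := hcop
  have hnz : (n : ℤ) = 2 * (d : ℤ) * s := by
    have : n = d * (2 * s) := by rw [hnm, hs]
    push_cast [this]; ring
  have hback : (2 * (d : ℤ)) - u * C = v * s * (2 * d) := by
    rw [hCval]; nlinarith [huv]
  rw [range_mulLeft_zmod]
  apply le_antisymm
  · rw [AddSubgroup.zmultiples_le, AddSubgroup.mem_zmultiples_iff]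
    refine ⟨T, ?_⟩
    calc T • (((2 * d : ℕ)) : ZMod n) = ((T * (2 * (d : ℤ)) : ℤ) : ZMod n) := by
          push_cast [zsmul_eq_mul]; ring
      _ = ((C : ℤ) : ZMod n) := by rw [← hCval]
  · rw [AddSubgroup.zmultiples_le, AddSubgroup.mem_zmultiples_iff]
    refine ⟨u, ?_⟩
    have key : (u * C : ℤ) = 2 * (d : ℤ) - v * n := by
      rw [hnz]; linear_combination (-1 : ℤ) * hback
    calc u • ((C : ℤ) : ZMod n) = ((u * C : ℤ) : ZMod n) := by
          push_cast [zsmul_eq_mul]; ring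
      _ = ((2 * (d : ℤ) - v * n : ℤ) : ZMod n) := by rw [key]
      _ = ((2 * d : ℕ) : ZMod n) := by push_cast [ZMod.natCast_self]; ring
end

section
/- Let G be a finite cyclic group of order d acting on ℤ/nℤ (n = d·m, m = d·e) by multiplication by (1+km). If d is odd or k is even or 4 ∣ m, then the even-degree Tate cohomology ker(T_k)/im(N_k) and odd-degree Tate cohomology ker(N_k)/im(T_k) are both cyclic of order gcd(d,k). -/
/-!
Both `T` and `N` are multiplications on `ZMod n`, by `a = -k m` and by `S = ∑_{i<d} (1 + i k m)`.
On `ZMod n` the kernel of multiplication by an integer `c` has order `gcd(c, n)` and its image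
has order `n / gcd(c, n)`; since `n ∣ a S`, both Tate quotients are cyclic of order
`gcd(a, n) gcd(S, n) / n`. Gauss' formula gives `S = d (1 + k e d(d-1)/2)`, and the parity
hypothesis is exactly what makes `1 + k e d(d-1)/2` coprime to `m = d e`, so `gcd(S, n) = d`
while `gcd(a, n) = m gcd(d, k)`.
-/

open Finset

theorem Nat.div_div_eq_mul_div_of_dvd {x y n : ℕ} (hn : n ≠ 0) (hy : y ∣ n) (h : n ∣ x * y) :
    x / (n / y) = x * y / n := by
  have hy0 : y ≠ 0 := ne_zero_of_dvd_ne_zero hn hy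
  refine Nat.div_eq_of_eq_mul_left
    (Nat.div_pos (Nat.le_of_dvd (Nat.pos_of_ne_zero hn) hy) (Nat.pos_of_ne_zero hy0)) ?_
  rw [Nat.div_mul_div_comm h hy, mul_assoc, mul_comm y n, Nat.mul_div_cancel _ (by positivity)]

theorem Int.two_mul_sum_range_id (d : ℕ) : 2 * ∑ i ∈ Finset.range d, (i : ℤ) = d * (d - 1) := by
  induction d with
  | zero => simp
  | succ d ih => rw [sum_range_succ, mul_add, ih]; push_cast; ring

theorem Int.isCoprime_one_add_mul_mul {d k e C : ℤ} (hC : 2 * C = d * (d - 1))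
    (h : Odd d ∨ Even k ∨ 4 ∣ d * e) : IsCoprime (1 + k * C * e) (d * e) := by
  have one_add_mul (a b : ℤ) : IsCoprime (1 + a * b) a := isCoprime_one_left.add_mul_left_left b
  refine IsCoprime.mul_right ?_ (isCoprime_one_left.add_mul_right_left (k * C))
  rcases Int.even_or_odd' d with ⟨u, rfl | rfl⟩
  · rcases Int.even_or_odd' k with ⟨s, rfl | rfl⟩
    · convert one_add_mul (2 * u) (s * (2 * u - 1) * e) using 1
      linear_combination (s * e) * hC
    have hC' : C = u * (2 * u - 1) := by linarith
    obtain ⟨v, hv⟩ : 2 ∣ u * e := by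
      obtain ⟨t, ht⟩ : 4 ∣ 2 * u * e :=
        (h.resolve_left (Int.not_odd_iff_even.2 (even_two_mul u))).resolve_left
          (Int.not_even_iff_odd.2 (odd_two_mul_add_one s))
      exact ⟨t, by linarith⟩
    refine IsCoprime.mul_right ?_ ?_
    · convert one_add_mul 2 ((2 * s + 1) * (2 * u - 1) * v) using 1
      rw [hC']; linear_combination (2 * s + 1) * (2 * u - 1) * hv
    · convert one_add_mul u ((2 * s + 1) * (2 * u - 1) * e) using 1
      rw [hC']; ring
  · have hC' : C = (2 * u + 1) * u := by linarith
    convert one_add_mul (2 * u + 1) (k * u * e) using 1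
    rw [hC']; ring

theorem Int.gcd_sum_range_one_add_mul_mul {d e : ℕ} {k : ℤ} (h : Odd d ∨ Even k ∨ 4 ∣ d * e) :
    Int.gcd (∑ i ∈ Finset.range d, (1 + (i : ℤ) * k * (d * e : ℕ))) (d * (d * e) : ℕ) = d := by
  set C := ∑ i ∈ Finset.range d, (i : ℤ)
  have hS : ∑ i ∈ Finset.range d, (1 + (i : ℤ) * k * (d * e : ℕ)) = d * (1 + k * C * e) := by
    simp only [sum_add_distrib, sum_const, card_range, nsmul_eq_mul, mul_one, ← sum_mul]
    push_cast; ring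
  have hcop : IsCoprime (1 + k * C * e) (d * e) :=
    Int.isCoprime_one_add_mul_mul (Int.two_mul_sum_range_id d) (by exact_mod_cast h)
  rw [hS, Nat.cast_mul, Int.gcd_mul_left, Nat.cast_mul, Int.isCoprime_iff_gcd_eq_one.1 hcop,
    Int.natAbs_natCast, mul_one]

theorem AddSubgroup.card_quotient_addSubgroupOf {G : Type*} [AddGroup G] [Finite G]
    {H K : AddSubgroup G} (hHK : H ≤ K) :
    Nat.card (K ⧸ H.addSubgroupOf K) = Nat.card K / Nat.card H := by
  have key := (H.addSubgroupOf K).card_eq_card_quotient_mul_card_addSubgroup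
  rw [Nat.card_congr (addSubgroupOfEquivOfLe hHK).toEquiv] at key
  exact Nat.eq_div_of_mul_eq_left Nat.card_pos.ne' key.symm

theorem IsAddCyclic.nonempty_quotient_addSubgroupOf_addEquiv {G : Type*} [AddGroup G]
    [IsAddCyclic G] [Finite G] {H K : AddSubgroup G} (hHK : H ≤ K) :
    Nonempty ((K ⧸ H.addSubgroupOf K) ≃+ ZMod (Nat.card K / Nat.card H)) := by
  have : IsAddCyclic (K ⧸ H.addSubgroupOf K) :=
    isAddCyclic_of_surjective _ (QuotientAddGroup.mk'_surjective _)
  rw [← AddSubgroup.card_quotient_addSubgroupOf hHK]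
  exact ⟨(zmodAddCyclicAddEquiv this).symm⟩

namespace ZMod

variable {n : ℕ}

theorem range_mulLeft (a : ZMod n) :
    (AddMonoidHom.mulLeft a).range = AddSubgroup.zmultiples a := by
  ext x
  constructor
  · rintro ⟨y, rfl⟩
    obtain ⟨c, rfl⟩ := ZMod.intCast_surjective y
    exact ⟨c, by simp [zsmul_eq_mul, mul_comm]⟩
  · rintro ⟨c, rfl⟩
    exact ⟨c, by simp [zsmul_eq_mul, mul_comm]⟩

theorem addOrderOf_intCast [NeZero n] (a : ℤ) : addOrderOf (a : ZMod n) = n / a.gcd n := by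
  rw [Int.gcd_comm]
  rcases Int.natAbs_eq a with ha | ha <;> rw [ha]
  · rw [Int.cast_natCast, addOrderOf_coe _ (NeZero.ne n), Int.gcd_natCast_natCast]
  · rw [Int.cast_neg, Int.cast_natCast, addOrderOf_neg, addOrderOf_coe _ (NeZero.ne n),
      Int.gcd_neg, Int.gcd_natCast_natCast]

theorem card_range_mulLeft_intCast [NeZero n] (a : ℤ) :
    Nat.card (AddMonoidHom.mulLeft (a : ZMod n)).range = n / a.gcd n := by
  rw [range_mulLeft, Nat.card_zmultiples, addOrderOf_intCast]

theorem card_ker_mulLeft_intCast [NeZero n] (a : ℤ) :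
    Nat.card (AddMonoidHom.mulLeft (a : ZMod n)).ker = a.gcd n := by
  have hdvd : a.gcd n ∣ n := by exact_mod_cast Int.gcd_dvd_right a n
  have key := (AddMonoidHom.mulLeft (a : ZMod n)).ker.card_mul_index
  rw [AddSubgroup.index_ker, Nat.card_zmod] at key
  rw [← Nat.div_div_self hdvd (NeZero.ne n), ← card_range_mulLeft_intCast]
  exact Nat.eq_div_of_mul_eq_left Nat.card_pos.ne' key

theorem nonempty_ker_mulLeft_quotient_range_addEquiv [NeZero n] {a b : ℤ}
    (hab : (n : ℤ) ∣ a * b) :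
    Nonempty ((AddMonoidHom.mulLeft (a : ZMod n)).ker ⧸
        (AddMonoidHom.mulLeft (b : ZMod n)).range.addSubgroupOf
          (AddMonoidHom.mulLeft (a : ZMod n)).ker ≃+
      ZMod (a.gcd n * b.gcd n / n)) := by
  have hle : (AddMonoidHom.mulLeft (b : ZMod n)).range ≤
      (AddMonoidHom.mulLeft (a : ZMod n)).ker := by
    rintro _ ⟨x, rfl⟩
    rw [AddMonoidHom.mem_ker, AddMonoidHom.coe_mulLeft, AddMonoidHom.coe_mulLeft, ← mul_assoc,
      ← Int.cast_mul, (intCast_zmod_eq_zero_iff_dvd _ n).2 hab, zero_mul]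
  have hn : n ∣ a.gcd n * b.gcd n := by
    rw [Int.gcd_comm a, Int.gcd_comm b]
    exact Nat.dvd_gcd_mul_gcd_iff_dvd_mul.2 (Int.natAbs_mul a b ▸ Int.natAbs_dvd_natAbs.2 hab)
  rw [← Nat.div_div_eq_mul_div_of_dvd (NeZero.ne n) (by exact_mod_cast Int.gcd_dvd_right b n) hn,
    ← card_ker_mulLeft_intCast, ← card_range_mulLeft_intCast]
  exact IsAddCyclic.nonempty_quotient_addSubgroupOf_addEquiv hle

end ZMod

theorem stmt_19_general (n d e m : ℕ) (hd : 0 < d) (hm : 0 < m)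
    (hnm : n = d * m) (hme : m = d * e) (k : ℤ)
    (h : Odd d ∨ Even k ∨ 4 ∣ m)
    (T N : ZMod n →+ ZMod n)
    (hT : T = AddMonoidHom.mulLeft (-(k : ZMod n) * (m : ZMod n)))
    (hN : N = AddMonoidHom.mulLeft (((∑ i ∈ Finset.range d, (1 + (i : ℤ) * k * m)) : ℤ) : ZMod n)) :
    Nonempty ((T.ker ⧸ N.range.addSubgroupOf T.ker) ≃+ ZMod (Int.gcd d k)) ∧
    Nonempty ((N.ker ⧸ T.range.addSubgroupOf N.ker) ≃+ ZMod (Int.gcd d k)) := by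
  subst hnm hme
  have : NeZero (d * (d * e)) := ⟨by positivity⟩
  set S := ∑ i ∈ Finset.range d, (1 + (i : ℤ) * k * (d * e : ℕ))
  have hgcdS : S.gcd (d * (d * e) : ℕ) = d := Int.gcd_sum_range_one_add_mul_mul h
  have hgcdT : Int.gcd (-(k * (d * e : ℕ))) (d * (d * e) : ℕ) = d * e * Int.gcd d k := by
    rw [Int.neg_gcd, Nat.cast_mul (d : ℕ) (d * e), mul_comm k, mul_comm (d : ℤ), Int.gcd_mul_left,
      Int.gcd_comm, Int.natAbs_natCast]
  have hdvd : ((d * (d * e) : ℕ) : ℤ) ∣ -(k * (d * e : ℕ)) * S := by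
    rw [Nat.cast_mul d, mul_comm (d : ℤ)]
    exact mul_dvd_mul (dvd_neg.2 (dvd_mul_left _ _)) (hgcdS ▸ Int.gcd_dvd_left _ _)
  have hcard : d * e * Int.gcd d k * d / (d * (d * e)) = Int.gcd d k := by
    rw [show d * e * Int.gcd d k * d = d * (d * e) * Int.gcd d k by ring,
      Nat.mul_div_cancel_left _ (by positivity)]
  have hT' : T = AddMonoidHom.mulLeft ((-(k * (d * e : ℕ)) : ℤ) : ZMod (d * (d * e))) := by
    rw [hT]; push_cast; ring_nf
  rw [hT', hN]
  constructor
  · have := ZMod.nonempty_ker_mulLeft_quotient_range_addEquiv hdvd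
    rwa [hgcdS, hgcdT, hcard] at this
  · have := ZMod.nonempty_ker_mulLeft_quotient_range_addEquiv
      (mul_comm (-(k * (d * e : ℕ))) S ▸ hdvd)
    rwa [hgcdS, hgcdT, mul_comm d (d * e * _), hcard] at this

/-- Let G be a finite cyclic group of order d acting on ℤ/nℤ (n = d·m, m = d·e) by multiplication
by (1+km); T_k = 1 - σ is multiplication by -km and N_k = ∑_{i<d} σ^i is multiplication by
∑_{i<d}(1+ikm). If d is odd or k is even or 4 ∣ m, then the even-degree Tate cohomology
ker(T_k)/im(N_k) and the odd-degree Tate cohomology ker(N_k)/im(T_k) are both cyclic of order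
gcd(d,k). -/
theorem stmt_19 (n d e m : ℕ) (hd : 0 < d) (he : 0 < e) (hm : 0 < m)
    (hnm : n = d * m) (hme : m = d * e) (k : ℤ)
    (h : Odd d ∨ Even k ∨ 4 ∣ m)
    (T N : ZMod n →+ ZMod n)
    (hT : T = AddMonoidHom.mulLeft (-(k : ZMod n) * (m : ZMod n)))
    (hN : N = AddMonoidHom.mulLeft (((∑ i ∈ Finset.range d, (1 + (i : ℤ) * k * m)) : ℤ) : ZMod n)) :
    Nonempty ((T.ker ⧸ N.range.addSubgroupOf T.ker) ≃+ ZMod (Int.gcd d k)) ∧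
    Nonempty ((N.ker ⧸ T.range.addSubgroupOf N.ker) ≃+ ZMod (Int.gcd d k)) :=
  stmt_19_general n d e m hd hm hnm hme k h T N hT hN
end
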